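/- In the periodic lock scheduling model with k streams with parameters (δ_i, λ_i, μ_i), there exists a feasible schedule σ such that the limit C_{avg,σ} = lim_{T→∞} (1/T) ∑_{t=1}^T C_σ(t) exists and is finite. (Lemma 3.2.) -/

import Mathlib

/-!
Serve the two directions alternately, `D, U, D, U, …`, never waiting. This schedule is feasible,
and each queue is emptied every other period, so at time `t + 1` only the direction served at
time `t` has a nonempty queue, holding exactly its arrivals of period `t + 1`. The cost is
therefore periodic with period `2 ∏ λᵢ`, and the Cesàro means of a periodic sequence converge to
its mean over one period.
-/

/-- A travel direction: downstream `D` or upstream `U`. -/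
inductive Dir : Type
  | D | U
deriving DecidableEq

/-- An action of the lock operator in a period: process downstream-waiting
vessels (`D`), process upstream-waiting vessels (`U`), or wait (`W`). -/
inductive Act : Type
  | D | U | W
deriving DecidableEq

/-- The action processing vessels of direction `δ`. -/
def Dir.toAct : Dir → Act
  | Dir.D => Act.D
  | Dir.U => Act.U

/-- The opposite direction. -/
def Dir.flip : Dir → Dir
  | Dir.D => Dir.U
  | Dir.U => Dir.D

/-- A schedule `σ : ℕ → Act` (time starts at `t = 1`) is feasible if the
subsequence of non-`W` actions strictly alternates between `D` and `U`:
any two non-`W` actions with only `W`'s in between must differ. -/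
def Feasible (σ : ℕ → Act) : Prop :=
  ∀ t t' : ℕ, 1 ≤ t → t < t' → σ t ≠ Act.W → σ t' ≠ Act.W →
    (∀ s : ℕ, t < s → s < t' → σ s = Act.W) → σ t' ≠ σ t

/-- The number of vessels arriving from direction `δ` at time `t`, for `k`
streams with directions `dir`, periodicities `lam` and offsets `mu`:
stream `i` has an arrival at `t` iff `t ≡ mu i (mod lam i)`. -/
def arrivals (k : ℕ) (dir : Fin k → Dir) (lam mu : Fin k → ℕ) (δ : Dir) (t : ℕ) : ℕ :=
  ∑ i ∈ Finset.univ.filter (fun i => dir i = δ),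
    if t % lam i = mu i % lam i then 1 else 0

/-- The queue length `n_δ(t)`: number of vessels waiting at the lock in
direction `δ` at time `t`, given arrival pattern `a` and schedule `σ`. -/
def queueLen (a : Dir → ℕ → ℕ) (σ : ℕ → Act) (δ : Dir) : ℕ → ℕ
  | 0 => 0
  | t + 1 => if σ (t + 1) = δ.toAct then 0 else queueLen a σ δ t + a δ (t + 1)

/-- The waiting cost `C_σ(t) = n_D(t) + n_U(t)` in period `t`. -/
def lockCost (a : Dir → ℕ → ℕ) (σ : ℕ → Act) (t : ℕ) : ℕ :=
  queueLen a σ Dir.D t + queueLen a σ Dir.U t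

/-- The long-run average waiting time of `σ` exists and equals `L`. -/
def AvgCostIs (a : Dir → ℕ → ℕ) (σ : ℕ → Act) (L : ℝ) : Prop :=
  Filter.Tendsto (fun T : ℕ => (∑ t ∈ Finset.Icc 1 T, (lockCost a σ t : ℝ)) / T)
    Filter.atTop (nhds L)

/-- A schedule is single-wait if no two consecutive periods are both `W`. -/
def SingleWait (σ : ℕ → Act) : Prop :=
  ∀ t : ℕ, 1 ≤ t → ¬(σ t = Act.W ∧ σ (t + 1) = Act.W)

/-- A schedule is periodic with period `P` if `σ (t + P) = σ t` for all `t ≥ 1`. -/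
def PeriodicSched (σ : ℕ → Act) (P : ℕ) : Prop :=
  ∀ t : ℕ, 1 ≤ t → σ (t + P) = σ t

open Finset Filter Topology Function

namespace Function.Periodic

lemma sum_range_mul_add {M : Type*} [AddCommMonoid M] {g : ℕ → M} {P : ℕ}
    (hg : Periodic g P) (q r : ℕ) :
    ∑ t ∈ range (q * P + r), g t = q • ∑ t ∈ range P, g t + ∑ t ∈ range r, g t := by
  induction q with
  | zero => simp
  | succ q ih =>
    rw [show (q + 1) * P + r = P + (q * P + r) by ring, sum_range_add]
    have hshift : ∀ x, g (P + x) = g x := fun x => by rw [add_comm]; exact hg x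
    simp only [hshift]
    rw [ih, succ_nsmul', add_assoc]

variable {g : ℕ → ℝ} {P : ℕ}

lemma exists_abs_sum_range_sub_le (hg : Periodic g P) (hP : 0 < P) :
    ∃ C, ∀ T : ℕ, |∑ t ∈ range T, g t - T * ((∑ t ∈ range P, g t) / P)| ≤ C := by
  set S := ∑ t ∈ range P, g t
  refine ⟨∑ r ∈ range P, |∑ t ∈ range r, g t - r * (S / P)|, fun T => ?_⟩
  have hT : (T : ℝ) = (T / P : ℕ) * P + (T % P : ℕ) := by
    exact_mod_cast (Nat.div_add_mod' T P).symm
  have hreduce : ∑ t ∈ range T, g t - T * (S / P)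
      = ∑ t ∈ range (T % P), g t - (T % P : ℕ) * (S / P) := by
    have hsum := hg.sum_range_mul_add (T / P) (T % P)
    rw [Nat.div_add_mod'] at hsum
    rw [hsum, nsmul_eq_mul, hT]
    field_simp
    ring
  rw [hreduce]
  exact single_le_sum (f := fun r : ℕ => |∑ t ∈ range r, g t - r * (S / P)|)
    (fun _ _ => abs_nonneg _) (mem_range.mpr (Nat.mod_lt T hP))

lemma tendsto_sum_range_div (hg : Periodic g P) (hP : 0 < P) :
    Tendsto (fun T : ℕ => (∑ t ∈ range T, g t) / T) atTop (𝓝 ((∑ t ∈ range P, g t) / P)) := by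
  obtain ⟨C, hC⟩ := hg.exists_abs_sum_range_sub_le hP
  rw [← tendsto_sub_nhds_zero_iff]
  refine squeeze_zero_norm' ?_ (tendsto_const_div_atTop_nhds_zero_nat C)
  filter_upwards [eventually_gt_atTop 0] with T hT
  have hT' : (0 : ℝ) < T := Nat.cast_pos.mpr hT
  have hdiff : (∑ t ∈ range T, g t) / T - (∑ t ∈ range P, g t) / P
      = (∑ t ∈ range T, g t - T * ((∑ t ∈ range P, g t) / P)) / T := by
    field_simp
  rw [Real.norm_eq_abs, hdiff, abs_div, abs_of_pos hT']
  exact div_le_div_of_nonneg_right (hC T) hT'.le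

end Function.Periodic

lemma Dir.toAct_ne_W (δ : Dir) : δ.toAct ≠ Act.W := by cases δ <;> decide

lemma Dir.toAct_flip_ne (δ : Dir) : δ.flip.toAct ≠ δ.toAct := by cases δ <;> decide

lemma lockCost_eq_queueLen_add_queueLen_flip (a : Dir → ℕ → ℕ) (σ : ℕ → Act) (δ : Dir) (t : ℕ) :
    lockCost a σ t = queueLen a σ δ t + queueLen a σ δ.flip t := by
  cases δ
  · rfl
  · exact add_comm _ _

section Queue

variable {a : Dir → ℕ → ℕ} {σ : ℕ → Act} {δ : Dir} {t : ℕ}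

lemma queueLen_eq_zero_of_eq_toAct (h : σ t = δ.toAct) : queueLen a σ δ t = 0 := by
  cases t with
  | zero => rfl
  | succ t => simp [queueLen, h]

lemma queueLen_succ_of_eq_toAct (ht : σ t = δ.toAct) (hne : σ (t + 1) ≠ δ.toAct) :
    queueLen a σ δ (t + 1) = a δ (t + 1) := by
  simp [queueLen, hne, queueLen_eq_zero_of_eq_toAct ht]

end Queue

def altDir (t : ℕ) : Dir := if t % 2 = 1 then Dir.D else Dir.U

def altSchedule (t : ℕ) : Act := (altDir t).toAct

lemma altDir_succ (t : ℕ) : altDir (t + 1) = (altDir t).flip := by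
  unfold altDir
  split_ifs <;> first | rfl | omega

lemma periodic_altDir {P : ℕ} (h : 2 ∣ P) : Periodic altDir P := by
  intro t
  simp only [altDir, Nat.add_mod, Nat.mod_eq_zero_of_dvd h, add_zero, Nat.mod_mod]

lemma feasible_altSchedule : Feasible altSchedule := by
  intro t t' _ htt' _ _ hW
  obtain rfl : t' = t + 1 := by
    by_contra hne
    exact (altDir (t + 1)).toAct_ne_W (hW (t + 1) (by omega) (by omega))
  rw [altSchedule, altSchedule, altDir_succ]
  exact (altDir t).toAct_flip_ne

lemma lockCost_altSchedule_succ (a : Dir → ℕ → ℕ) (t : ℕ) :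
    lockCost a altSchedule (t + 1) = a (altDir t) (t + 1) := by
  have hnext : altSchedule (t + 1) = (altDir t).flip.toAct := by rw [altSchedule, altDir_succ]
  rw [lockCost_eq_queueLen_add_queueLen_flip a altSchedule (altDir t),
    queueLen_succ_of_eq_toAct rfl (hnext ▸ (altDir t).toAct_flip_ne),
    queueLen_eq_zero_of_eq_toAct hnext, add_zero]

lemma periodic_lockCost_altSchedule_succ {a : Dir → ℕ → ℕ} {P : ℕ}
    (ha : ∀ δ, Periodic (a δ) P) (h2 : 2 ∣ P) :
    Periodic (fun t => lockCost a altSchedule (t + 1)) P := by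
  intro t
  change lockCost a altSchedule (t + P + 1) = lockCost a altSchedule (t + 1)
  rw [lockCost_altSchedule_succ, lockCost_altSchedule_succ, periodic_altDir h2 t, add_right_comm,
    ha]

lemma periodic_arrivals {k P : ℕ} {dir : Fin k → Dir} {lam mu : Fin k → ℕ}
    (h : ∀ i, lam i ∣ P) (δ : Dir) : Periodic (arrivals k dir lam mu δ) P := by
  intro t
  refine sum_congr rfl fun i _ => ?_
  obtain ⟨c, hc⟩ := h i
  rw [hc, Nat.add_mul_mod_self_left]

lemma avgCostIs_of_periodic {a : Dir → ℕ → ℕ} {σ : ℕ → Act} {P : ℕ} (hP : 0 < P)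
    (h : Periodic (fun t => lockCost a σ (t + 1)) P) :
    AvgCostIs a σ ((∑ t ∈ range P, (lockCost a σ (t + 1) : ℝ)) / P) := by
  have hsum : ∀ T, ∑ t ∈ Icc 1 T, (lockCost a σ t : ℝ)
      = ∑ t ∈ range T, (lockCost a σ (t + 1) : ℝ) := by
    intro T
    rw [range_eq_Ico, sum_Ico_add' (fun t => (lockCost a σ t : ℝ))]
    rfl
  simp only [AvgCostIs, hsum]
  exact (h.comp Nat.cast).tendsto_sum_range_div hP

theorem exists_feasible_with_finite_avg_general (k : ℕ) (dir : Fin k → Dir) (lam mu : Fin k → ℕ)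
    (hlam : ∀ i, 1 ≤ lam i) :
    ∃ (σ : ℕ → Act) (L : ℝ), Feasible σ ∧ AvgCostIs (arrivals k dir lam mu) σ L := by
  set P := 2 * ∏ i, lam i
  have hP : 0 < P := Nat.mul_pos two_pos (prod_pos fun i _ => hlam i)
  have harr : ∀ δ, Periodic (arrivals k dir lam mu δ) P :=
    periodic_arrivals fun i => dvd_mul_of_dvd_right (dvd_prod_of_mem lam (mem_univ i)) 2
  exact ⟨altSchedule, _, feasible_altSchedule,
    avgCostIs_of_periodic hP (periodic_lockCost_altSchedule_succ harr (dvd_mul_right 2 _))⟩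

/-- **Lemma 3.2.** There exists a feasible schedule whose long-run
average waiting time exists and is finite. -/
theorem exists_feasible_with_finite_avg (k : ℕ) (dir : Fin k → Dir) (lam mu : Fin k → ℕ)
    (hlam : ∀ i, 1 ≤ lam i) (hmu : ∀ i, 1 ≤ mu i ∧ mu i ≤ lam i) :
    ∃ (σ : ℕ → Act) (L : ℝ), Feasible σ ∧ AvgCostIs (arrivals k dir lam mu) σ L :=
  exists_feasible_with_finite_avg_general k dir lam mu hlam
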